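/- arXiv:2208.13573 — 2 statements merged into one kernel-verified Lean document; each statement's English description precedes it below -/
import Mathlib

section
/- Let U, Δ ∈ ℝ with U < Δ < (3/2)U, assume U/(2(3U−2Δ)) − 1/2 is not an integer, and write r* := ⌊U/(2(3U−2Δ)) − 1/2⌋ with fractional part δ ∈ (0,1), i.e., r* = U/(2(3U−2Δ)) − 1/2 − δ. Define Γ1 := −3(3(r*)^2−r*)U + 6(r*)^2Δ + 5(2r*+1)Δ − (15r*+4)U + Δ and Γ2 := −3(3(r*+1)^2−(r*+1))U + 6(r*+1)^2Δ + (2r*+3)Δ − 3(r*+1)U + Δ. Then Γ1 > Γ2 if δ ∈ (0, 1/2), and Γ1 < Γ2 if δ ∈ (1/2, 1). -/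
/-- Comparison of the two candidate nucleation barriers `Γ1` and `Γ2` for Kawasaki
dynamics on the hexagonal lattice, with `r* = U/(2(3U-2Δ)) - 1/2 - δ`, `δ ∈ (0,1)`:
`Γ1 > Γ2` when `δ ∈ (0, 1/2)` and `Γ1 < Γ2` when `δ ∈ (1/2, 1)`. -/
theorem barrier_comparison (U Δ : ℝ) (h1 : U < Δ) (h2 : Δ < 3 / 2 * U)
    (rstar : ℤ) (δ : ℝ) (hδ0 : 0 < δ) (hδ1 : δ < 1)
    (hr : (rstar : ℝ) = U / (2 * (3 * U - 2 * Δ)) - 1 / 2 - δ)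
    (Γ1 Γ2 : ℝ)
    (hΓ1 : Γ1 = -3 * (3 * (rstar : ℝ) ^ 2 - (rstar : ℝ)) * U + 6 * (rstar : ℝ) ^ 2 * Δ
      + 5 * (2 * (rstar : ℝ) + 1) * Δ - (15 * (rstar : ℝ) + 4) * U + Δ)
    (hΓ2 : Γ2 = -3 * (3 * ((rstar : ℝ) + 1) ^ 2 - ((rstar : ℝ) + 1)) * U
      + 6 * ((rstar : ℝ) + 1) ^ 2 * Δ + (2 * (rstar : ℝ) + 3) * Δ
      - 3 * ((rstar : ℝ) + 1) * U + Δ) :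
    (δ < 1 / 2 → Γ2 < Γ1) ∧ (1 / 2 < δ → Γ1 < Γ2) := by
  have ha : (0:ℝ) < 3 * U - 2 * Δ := by linarith
  have ha' : 2 * (3 * U - 2 * Δ) ≠ 0 := by positivity
  have key : Γ1 - Γ2 = (3 * U - 2 * Δ) * (1 - 2 * δ) := by
    rw [hΓ1, hΓ2, hr]
    field_simp
    ring
  constructor
  · intro h; nlinarith
  · intro h; nlinarith
end

section
/- Let U, Δ ∈ ℝ with U < Δ < (3/2)U and r* ≥ 1 defined as above. The saddle value between E(r*+2) and E(r*+3), namely Γ3 := −3(3(r*+2)^2−(r*+2))U + 6(r*+2)^2Δ + 2(Δ−U) + Δ, satisfies Γ3 < Γ1 and Γ3 < Γ2, where Γ1, Γ2 are as in the barrier-comparison statement. -/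
/-! With `ε = 3U - 2Δ > 0`, both gaps `Γ1 - Γ3` and `Γ2 - Γ3` are positive once
`U < ε (2r + 3)`. The definition of `r*` gives `U / ε = 2r* + 1 + 2δ`, which is below
`2r* + 3` exactly because `δ < 1`. -/

def gamma1 (r U Δ : ℝ) : ℝ :=
  -3 * (3 * r ^ 2 - r) * U + 6 * r ^ 2 * Δ + 5 * (2 * r + 1) * Δ - (15 * r + 4) * U + Δ

def gamma2 (r U Δ : ℝ) : ℝ :=
  -3 * (3 * (r + 1) ^ 2 - (r + 1)) * U + 6 * (r + 1) ^ 2 * Δ + (2 * r + 3) * Δ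
    - 3 * (r + 1) * U + Δ

def gamma3 (r U Δ : ℝ) : ℝ :=
  -3 * (3 * (r + 2) ^ 2 - (r + 2)) * U + 6 * (r + 2) ^ 2 * Δ + 2 * (Δ - U) + Δ

theorem gamma1_sub_gamma3 (r U Δ : ℝ) :
    gamma1 r U Δ - gamma3 r U Δ = 7 / 2 * ((3 * U - 2 * Δ) * (2 * r + 3) - U) := by
  unfold gamma1 gamma3; ring

theorem gamma2_sub_gamma3 (r U Δ : ℝ) :
    gamma2 r U Δ - gamma3 r U Δ
      = 5 / 2 * ((3 * U - 2 * Δ) * (2 * r + 3) - U) + (3 * U - 2 * Δ) := by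
  unfold gamma2 gamma3; ring

theorem lt_mul_two_mul_add_three_of_eq_div_sub {U ε r δ : ℝ} (hε : 0 < ε) (hδ : δ < 1)
    (hr : r = U / (2 * ε) - 1 / 2 - δ) : U < ε * (2 * r + 3) := by
  have hU : U = ε * (2 * r + 1 + 2 * δ) := by
    rw [hr]; field_simp; ring
  rw [hU]
  exact mul_lt_mul_of_pos_left (by linarith) hε

theorem gamma3_smallest_general (U Δ : ℝ) (h2 : Δ < 3 / 2 * U)
    (rstar : ℤ) (δ : ℝ) (hδ1 : δ < 1)
    (hr : (rstar : ℝ) = U / (2 * (3 * U - 2 * Δ)) - 1 / 2 - δ)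
    (Γ1 Γ2 Γ3 : ℝ)
    (hΓ1 : Γ1 = -3 * (3 * (rstar : ℝ) ^ 2 - (rstar : ℝ)) * U + 6 * (rstar : ℝ) ^ 2 * Δ
      + 5 * (2 * (rstar : ℝ) + 1) * Δ - (15 * (rstar : ℝ) + 4) * U + Δ)
    (hΓ2 : Γ2 = -3 * (3 * ((rstar : ℝ) + 1) ^ 2 - ((rstar : ℝ) + 1)) * U
      + 6 * ((rstar : ℝ) + 1) ^ 2 * Δ + (2 * (rstar : ℝ) + 3) * Δ
      - 3 * ((rstar : ℝ) + 1) * U + Δ)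
    (hΓ3 : Γ3 = -3 * (3 * ((rstar : ℝ) + 2) ^ 2 - ((rstar : ℝ) + 2)) * U
      + 6 * ((rstar : ℝ) + 2) ^ 2 * Δ + 2 * (Δ - U) + Δ) :
    Γ3 < Γ1 ∧ Γ3 < Γ2 := by
  have hε : 0 < 3 * U - 2 * Δ := by linarith
  have hgap := lt_mul_two_mul_add_three_of_eq_div_sub hε hδ1 hr
  obtain rfl : Γ1 = gamma1 rstar U Δ := hΓ1
  obtain rfl : Γ2 = gamma2 rstar U Δ := hΓ2
  obtain rfl : Γ3 = gamma3 rstar U Δ := hΓ3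
  constructor
  · linarith [gamma1_sub_gamma3 rstar U Δ]
  · linarith [gamma2_sub_gamma3 rstar U Δ]

/-- The saddle value `Γ3` between `E(r*+2)` and `E(r*+3)` is strictly smaller than
both barrier candidates `Γ1` and `Γ2`, with `r* = U/(2(3U-2Δ)) - 1/2 - δ ≥ 1`,
`δ ∈ (0,1)`, under `U < Δ < (3/2) U`. -/
theorem gamma3_smallest (U Δ : ℝ) (h1 : U < Δ) (h2 : Δ < 3 / 2 * U)
    (rstar : ℤ) (δ : ℝ) (hδ0 : 0 < δ) (hδ1 : δ < 1)
    (hr : (rstar : ℝ) = U / (2 * (3 * U - 2 * Δ)) - 1 / 2 - δ) (hr1 : 1 ≤ rstar)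
    (Γ1 Γ2 Γ3 : ℝ)
    (hΓ1 : Γ1 = -3 * (3 * (rstar : ℝ) ^ 2 - (rstar : ℝ)) * U + 6 * (rstar : ℝ) ^ 2 * Δ
      + 5 * (2 * (rstar : ℝ) + 1) * Δ - (15 * (rstar : ℝ) + 4) * U + Δ)
    (hΓ2 : Γ2 = -3 * (3 * ((rstar : ℝ) + 1) ^ 2 - ((rstar : ℝ) + 1)) * U
      + 6 * ((rstar : ℝ) + 1) ^ 2 * Δ + (2 * (rstar : ℝ) + 3) * Δ
      - 3 * ((rstar : ℝ) + 1) * U + Δ)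
    (hΓ3 : Γ3 = -3 * (3 * ((rstar : ℝ) + 2) ^ 2 - ((rstar : ℝ) + 2)) * U
      + 6 * ((rstar : ℝ) + 2) ^ 2 * Δ + 2 * (Δ - U) + Δ) :
    Γ3 < Γ1 ∧ Γ3 < Γ2 :=
  gamma3_smallest_general U Δ h2 rstar δ hδ1 hr Γ1 Γ2 Γ3 hΓ1 hΓ2 hΓ3
end
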